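/- arXiv:1505.04284 — 6 statements merged into one kernel-verified Lean document; each statement's English description precedes it below -/
import Mathlib

section
/- For n ≥ 1, ∑_{k=0}^{n-1} 𝔽_k^2 = n·𝔽_n^2 − ∑_{k=0}^{n-1} ((k+1)/F_{k+1})·(2𝔽_k + 1/F_{k+1}). -/
open Finset

noncomputable def harmFib (n : ℕ) : ℝ := ∑ k ∈ Finset.Icc 1 n, (1 : ℝ) / Nat.fib k

/- Summation by parts: `(k + 1) S (k + 1)² - k S k² = S k² + (k + 1) (S (k + 1)² - S k²)` telescopes. -/
theorem sum_range_sq_eq_mul_sq_sub {R : Type*} [CommRing R] (S : ℕ → R) (n : ℕ) :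
    ∑ k ∈ range n, S k ^ 2 =
      n * S n ^ 2 - ∑ k ∈ range n, (k + 1) * (S (k + 1) - S k) * (2 * S k + (S (k + 1) - S k)) := by
  have telescope := sum_range_sub (fun k => (k : R) * S k ^ 2) n
  simp only [Nat.cast_add, Nat.cast_one, Nat.cast_zero, zero_mul, sub_zero] at telescope
  rw [eq_sub_iff_add_eq, ← sum_add_distrib, ← telescope]
  exact sum_congr rfl fun k _ => by ring

lemma harmFib_succ (n : ℕ) : harmFib (n + 1) = harmFib n + 1 / Nat.fib (n + 1) := by
  rw [harmFib, harmFib, sum_Icc_succ_top (by omega)]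

theorem stmt_1_general (n : ℕ) :
    ∑ k ∈ Finset.range n, (harmFib k) ^ 2 =
      n * (harmFib n) ^ 2 -
        ∑ k ∈ Finset.range n,
          ((k + 1 : ℝ) / Nat.fib (k + 1)) * (2 * harmFib k + 1 / Nat.fib (k + 1)) := by
  rw [sum_range_sq_eq_mul_sq_sub harmFib n]
  congr 1
  refine sum_congr rfl fun k _ => ?_
  rw [harmFib_succ, add_sub_cancel_left, div_eq_mul_one_div (k + 1 : ℝ)]

theorem stmt_1 (n : ℕ) (hn : 1 ≤ n) :
    ∑ k ∈ Finset.range n, (harmFib k) ^ 2 =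
      n * (harmFib n) ^ 2 -
        ∑ k ∈ Finset.range n,
          ((k + 1 : ℝ) / Nat.fib (k + 1)) * (2 * harmFib k + 1 / Nat.fib (k + 1)) :=
  stmt_1_general n
end

section
/- For n ≥ 1 and nonnegative integer m, ∑_{k=0}^{n-1} C(k,m)·𝔽_k = C(n,m+1)·𝔽_n − ∑_{k=0}^{n-1} C(k+1,m+1)·(1/F_{k+1}). -/
open Finset

/- Summation by parts: by Pascal's rule `C(n+1, m+1) = C(n, m+1) + C(n, m)`, both sides
grow by `C(n, m) * ∑_{j ≤ n} f j` when `n` increases by one. -/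
theorem sum_range_choose_mul_sum_Icc {R : Type*} [CommRing R] (f : ℕ → R) (n m : ℕ) :
    ∑ k ∈ range n, (k.choose m : R) * ∑ j ∈ Icc 1 k, f j =
      (n.choose (m + 1) : R) * ∑ j ∈ Icc 1 n, f j -
        ∑ k ∈ range n, ((k + 1).choose (m + 1) : R) * f (k + 1) := by
  induction n with
  | zero => simp
  | succ n ih =>
    rw [sum_range_succ, sum_range_succ, ih, sum_Icc_succ_top (Nat.le_add_left 1 n),
      Nat.choose_succ_succ n m]
    push_cast
    ring

theorem stmt_2_general (n m : ℕ) :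
    ∑ k ∈ Finset.range n, (Nat.choose k m : ℝ) * harmFib k =
      (Nat.choose n (m + 1) : ℝ) * harmFib n -
        ∑ k ∈ Finset.range n, (Nat.choose (k + 1) (m + 1) : ℝ) * (1 / Nat.fib (k + 1)) :=
  sum_range_choose_mul_sum_Icc (fun k => 1 / (Nat.fib k : ℝ)) n m

theorem stmt_2 (n m : ℕ) (hn : 1 ≤ n) :
    ∑ k ∈ Finset.range n, (Nat.choose k m : ℝ) * harmFib k =
      (Nat.choose n (m + 1) : ℝ) * harmFib n -
        ∑ k ∈ Finset.range n, (Nat.choose (k + 1) (m + 1) : ℝ) * (1 / Nat.fib (k + 1)) :=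
  stmt_2_general n m
end

section
/- For n ≥ 1, ∑_{k=0}^{n-1} F_{k-1}·𝔽_k = F_n·𝔽_n − n, where F_{-1} = 1 (so that F_{k+1} = F_k + F_{k-1} for all k ≥ 0). -/
open Finset

lemma fib_succ_mul_harmFib_succ (n : ℕ) :
    (Nat.fib (n + 1) : ℝ) * harmFib (n + 1) = Nat.fib (n + 1) * harmFib n + 1 := by
  have hfib : (Nat.fib (n + 1) : ℝ) ≠ 0 := by exact_mod_cast (Nat.fib_pos.mpr n.succ_pos).ne'
  rw [harmFib_succ, mul_add, mul_one_div_cancel hfib]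

/-- The recurrence `F (n + 1) = F (n - 1) + F n`, read with the convention `F (-1) = 1`. -/
lemma ite_fib_pred_add_fib (n : ℕ) :
    (if n = 0 then (1 : ℝ) else (Nat.fib (n - 1) : ℝ)) + Nat.fib n = Nat.fib (n + 1) := by
  rcases n with _ | n
  · simp
  · rw [if_neg n.succ_ne_zero, Nat.add_sub_cancel]
    exact_mod_cast (Nat.fib_add_two).symm

theorem stmt_5_general (n : ℕ) :
    ∑ k ∈ Finset.range n, (if k = 0 then (1 : ℝ) else (Nat.fib (k - 1) : ℝ)) * harmFib k =
      (Nat.fib n : ℝ) * harmFib n - n := by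
  induction n with
  | zero => simp
  | succ n ih =>
    rw [sum_range_succ, ih, fib_succ_mul_harmFib_succ, ← ite_fib_pred_add_fib]
    push_cast
    ring

theorem stmt_5 (n : ℕ) (hn : 1 ≤ n) :
    ∑ k ∈ Finset.range n, (if k = 0 then (1 : ℝ) else (Nat.fib (k - 1) : ℝ)) * harmFib k =
      (Nat.fib n : ℝ) * harmFib n - n :=
  stmt_5_general n
end

section
/- For n ≥ 1, ∑_{k=0}^{n-1} L_{k-1}·𝔽_k = L_n·𝔽_n − ∑_{k=0}^{n-1} L_{k+1}/F_{k+1}, where L_k are the Lucas numbers with L_{-1} = −1, L_0 = 2, L_1 = 1. -/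
/-!
Induction on `n`: the new summand `L_{n-1} 𝔽_n` turns `L_n 𝔽_n` into `L_{n+1} 𝔽_n` by the Lucas
recurrence, and `L_{n+1} 𝔽_{n+1} - L_{n+1} / F_{n+1}` is that same quantity.
-/

open Finset

def lucas : ℕ → ℕ
  | 0 => 2
  | 1 => 1
  | n + 2 => lucas (n + 1) + lucas n

lemma harmFib_zero : harmFib 0 = 0 := by
  simp [harmFib]

/-- The `if` encodes `L₋₁ = -1`, the value that makes the recurrence hold at `k = 0` too. -/
lemma lucas_succ_eq_add_pred (k : ℕ) :
    (lucas (k + 1) : ℝ) = lucas k + if k = 0 then -1 else (lucas (k - 1) : ℝ) := by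
  rcases k with _ | k
  · norm_num [lucas]
  · simp [lucas, add_comm]

theorem stmt_6_general (n : ℕ) :
    ∑ k ∈ Finset.range n, (if k = 0 then (-1 : ℝ) else (lucas (k - 1) : ℝ)) * harmFib k =
      (lucas n : ℝ) * harmFib n - ∑ k ∈ Finset.range n, (lucas (k + 1) : ℝ) / Nat.fib (k + 1) := by
  induction n with
  | zero => simp [harmFib_zero]
  | succ n ih =>
    rw [Finset.sum_range_succ, Finset.sum_range_succ, ih, harmFib_succ,
      lucas_succ_eq_add_pred n]
    ring

theorem stmt_6 (n : ℕ) (hn : 1 ≤ n) :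
    ∑ k ∈ Finset.range n, (if k = 0 then (-1 : ℝ) else (lucas (k - 1) : ℝ)) * harmFib k =
      (lucas n : ℝ) * harmFib n - ∑ k ∈ Finset.range n, (lucas (k + 1) : ℝ) / Nat.fib (k + 1) :=
  stmt_6_general n
end

section
/- For n, r ≥ 1, the hyperharmonic Fibonacci number admits the closed-form expression 𝔽_n^{(r)} = ∑_{k=1}^{n} C(n−k+r−1, r−1)·(1/F_k). -/
open Finset

noncomputable def hFib : ℕ → ℕ → ℝ
  | 0, n => 1 / Nat.fib n
  | r + 1, n => ∑ k ∈ Finset.Icc 1 n, hFib r k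

/-! Induction on `r`: if `𝔽_m^{(r)} = ∑_k C(m - k + r - 1, r - 1) / F_k` for all `m`, then summing over
`m ≤ n` and exchanging the order of summation gives `1 / F_k` the weight
`∑_{m=k}^{n} C(m - k + r - 1, r - 1)`, which the hockey-stick identity collapses to `C(n - k + r, r)`. -/

theorem Nat.sum_Icc_choose_sub_add (r : ℕ) {k n : ℕ} (hkn : k ≤ n) :
    ∑ m ∈ Icc k n, (m - k + r).choose r = (n - k + r + 1).choose (r + 1) := by
  rw [← Ico_add_one_right_eq_Icc, sum_Ico_eq_sum_range, Nat.sub_add_comm hkn,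
    ← Nat.sum_range_add_choose]
  simp only [Nat.add_sub_cancel_left]

theorem sum_Icc_sum_Icc_choose_mul {R : Type*} [CommSemiring R] (f : ℕ → R) (a r n : ℕ) :
    ∑ m ∈ Icc a n, ∑ k ∈ Icc a m, ((m - k + r).choose r : R) * f k =
      ∑ k ∈ Icc a n, ((n - k + r + 1).choose (r + 1) : R) * f k := by
  rw [sum_comm' (t' := Icc a n) (s' := fun k => Icc k n) (by intro m k; simp only [mem_Icc]; omega)]
  refine sum_congr rfl fun k hk => ?_
  rw [← sum_mul, ← Nat.cast_sum, Nat.sum_Icc_choose_sub_add r (mem_Icc.mp hk).2]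

theorem hFib_succ_eq_sum_choose (r n : ℕ) :
    hFib (r + 1) n = ∑ k ∈ Icc 1 n, ((n - k + r).choose r : ℝ) * (1 / Nat.fib k) := by
  induction r generalizing n with
  | zero => simp [hFib]
  | succ r ih =>
    rw [hFib]
    simp_rw [ih]
    exact sum_Icc_sum_Icc_choose_mul _ 1 r n

theorem stmt_8_general (n r : ℕ) (hr : 1 ≤ r) :
    hFib r n = ∑ k ∈ Finset.Icc 1 n, (Nat.choose (n - k + r - 1) (r - 1) : ℝ) * (1 / Nat.fib k) := by
  obtain ⟨r, rfl⟩ := Nat.exists_eq_add_of_le' hr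
  simpa only [← Nat.add_assoc, Nat.add_sub_cancel] using hFib_succ_eq_sum_choose r n

theorem stmt_8 (n r : ℕ) (hn : 1 ≤ n) (hr : 1 ≤ r) :
    hFib r n = ∑ k ∈ Finset.Icc 1 n, (Nat.choose (n - k + r - 1) (r - 1) : ℝ) * (1 / Nat.fib k) :=
  stmt_8_general n r hr
end

section
/- Let C₂ be the n×n circulant matrix Circ(𝔽_0^{(r)}, 𝔽_1^{(r)}, …, 𝔽_{n−1}^{(r)}) for n, r ≥ 1. Its spectral norm equals 𝔽_{n−1}^{(r+1)}. -/
/-!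
The circulant matrix is entrywise nonnegative and each of its rows and columns is a permutation
of `𝔽_0^{(r)}, …, 𝔽_{n-1}^{(r)}`, so all row and column sums equal `𝔽_{n-1}^{(r+1)} =: s`.
If `s > 0`, then `s⁻¹ • C` is doubly stochastic, hence by Birkhoff a convex combination of
permutation matrices, which all have norm at most `1`; so `‖C‖ ≤ s`. The all-ones vector is
mapped to `s` times itself, so `‖C‖ ≥ s`.
-/

open Finset

open scoped Matrix.Norms.L2Operator

namespace Matrix

variable {ι : Type*} [Fintype ι] [DecidableEq ι]

theorem norm_le_l2_opNorm_of_sum_row_eq {𝕜 : Type*} [RCLike 𝕜] [Nonempty ι]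
    {M : Matrix ι ι 𝕜} {s : 𝕜} (hrow : ∀ i, ∑ j, M i j = s) : ‖s‖ ≤ ‖M‖ := by
  have hnorm_const (c : 𝕜) :
      ‖(EuclideanSpace.equiv ι 𝕜).symm (fun _ => c)‖ = ‖c‖ * √(Fintype.card ι) := by
    simp [EuclideanSpace.norm_eq, mul_comm]
  have hMones : M *ᵥ (fun _ => 1) = fun _ => s := funext fun i => by
    simp [mulVec, dotProduct, hrow]
  have hbound := M.l2_opNorm_mulVec ((EuclideanSpace.equiv ι 𝕜).symm fun _ => 1)
  rw [show ((EuclideanSpace.equiv ι 𝕜).symm fun _ => 1).ofLp = fun _ => 1 from rfl, hMones,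
    hnorm_const, hnorm_const, norm_one, one_mul] at hbound
  exact le_of_mul_le_mul_right hbound (by simp [Fintype.card_pos])

theorem l2_opNorm_le_of_nonneg_of_sum_row_col_eq [Nonempty ι] {M : Matrix ι ι ℝ} {s : ℝ}
    (hM : ∀ i j, 0 ≤ M i j) (hrow : ∀ i, ∑ j, M i j = s) (hcol : ∀ j, ∑ i, M i j = s) :
    ‖M‖ ≤ s := by
  obtain ⟨i₀⟩ := ‹Nonempty ι›
  rcases (hrow i₀ ▸ sum_nonneg fun j _ => hM i₀ j : 0 ≤ s).eq_or_lt with hs | hs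
  · have hzero : M = 0 := by
      ext i j
      exact (sum_eq_zero_iff_of_nonneg fun j _ => hM i j).1 (hrow i ▸ hs.symm) j (mem_univ j)
    simp [hzero, ← hs]
  have hstoch : s⁻¹ • M ∈ doublyStochastic ℝ ι := by
    refine mem_doublyStochastic_iff_sum.2 ⟨fun i j => ?_, fun i => ?_, fun j => ?_⟩
    · exact mul_nonneg (inv_nonneg.2 hs.le) (hM i j)
    · simp [← mul_sum, hrow, hs.ne']
    · simp [← mul_sum, hcol, hs.ne']
  have := l2_opNorm_le_one_of_mem_doublyStochastic hstoch
  rwa [norm_smul, Real.norm_of_nonneg (inv_nonneg.2 hs.le), inv_mul_le_iff₀ hs, mul_one] at this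

theorem l2_opNorm_of_apply_sub_eq_sum {G : Type*} [AddCommGroup G] [Fintype G] [DecidableEq G]
    [Nonempty G] {v : G → ℝ} (hv : ∀ k, 0 ≤ v k) :
    ‖(of fun i j => v (j - i) : Matrix G G ℝ)‖ = ∑ k, v k := by
  have hrow : ∀ i : G, ∑ j, v (j - i) = ∑ k, v k := fun i => (Equiv.subRight i).sum_comp v
  have hcol : ∀ j : G, ∑ i, v (j - i) = ∑ k, v k := fun j => (Equiv.subLeft j).sum_comp v
  refine le_antisymm (l2_opNorm_le_of_nonneg_of_sum_row_col_eq (fun i j => hv _) hrow hcol) ?_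
  simpa [Real.norm_of_nonneg (sum_nonneg fun k _ => hv k)] using
    norm_le_l2_opNorm_of_sum_row_eq (M := of fun i j => v (j - i)) hrow

end Matrix

theorem hFib_nonneg (r n : ℕ) : 0 ≤ hFib r n := by
  induction r generalizing n with
  | zero => unfold hFib; positivity
  | succ r ih => exact sum_nonneg fun k _ => ih k

-- For `r = 0` this is the junk value `1 / Nat.fib 0 = 1 / 0 = 0`.
theorem hFib_zero_right (r : ℕ) : hFib r 0 = 0 := by
  cases r <;> simp [hFib]

theorem sum_fin_hFib (r n : ℕ) : ∑ k : Fin n, hFib r k = hFib (r + 1) (n - 1) := by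
  rw [Fin.sum_univ_eq_sum_range]
  cases n with
  | zero => simp [hFib]
  | succ m =>
    rw [sum_range_succ', hFib_zero_right, add_zero, Nat.add_sub_cancel, hFib, range_eq_Ico,
      ← Ico_add_one_right_eq_Icc, sum_Ico_add' (hFib r)]

theorem stmt_13_general (n r : ℕ) (hn : 1 ≤ n) :
    ‖(Matrix.of (fun i j : Fin n => hFib r ((j - i : Fin n) : ℕ)) : Matrix (Fin n) (Fin n) ℝ)‖ =
      hFib (r + 1) (n - 1) := by
  have : NeZero n := ⟨by omega⟩
  rw [Matrix.l2_opNorm_of_apply_sub_eq_sum (v := fun k : Fin n => hFib r k)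
    fun k => hFib_nonneg r k, sum_fin_hFib]

theorem stmt_13 (n r : ℕ) (hn : 1 ≤ n) (hr : 1 ≤ r) :
    ‖(Matrix.of (fun i j : Fin n => hFib r ((j - i : Fin n) : ℕ)) : Matrix (Fin n) (Fin n) ℝ)‖ =
      hFib (r + 1) (n - 1) :=
  stmt_13_general n r hn
end
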